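/- Let H_n denote the monic (probabilists') Hermite polynomials, satisfying H_{n+1}(x) = x H_n(x) - n H_{n-1}(x) with H₀ = 1, H₁(x) = x. Let u be a pure unit quaternion (u² = -1) and s > 0 real, and set x = u s. Then the orthogonal polynomials P_n defined by P₀ = 1, P₁(z) = z, P_{n+1}(z) = z P_n(z) + β_n P_{n-1}(z) (β_n = n+2 for odd n, n for even n) satisfy: P_n(x) = (uⁿ/s) H_{n+1}(s) if n is even, and P_n(x) = (uⁿ/s²)(s H_{n+1}(s) + H_n(s)) if n is odd. -/

import Mathlib

open Polynomial Quaternion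

noncomputable def β (n : ℕ) : ℝ := if Odd n then n + 2 else n

noncomputable def P : ℕ → Polynomial ℝ
  | 0 => 1
  | 1 => X
  | (n + 2) => X * P (n + 1) + C (β (n + 1)) * P n

/-- Evaluation of the monic probabilists' Hermite polynomial at a real point. -/
noncomputable def H (n : ℕ) (s : ℝ) : ℝ := ((hermite n).map (Int.castRingHom ℝ)).eval s

/-! Since `u ^ 2 = -1`, evaluating `P n` at `s • u` gives `c n • u ^ n` with
`c (n + 2) = s * c (n + 1) - β (n + 1) * c n`. The parity-dependent closed form solves this
recurrence: the extra `2` in `β` at odd indices is exactly absorbed by the Hermite recurrence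
`H (n + 2) = s * H (n + 1) - (n + 1) * H n`. -/

theorem Polynomial.derivative_hermite_succ (n : ℕ) :
    derivative (hermite (n + 1)) = ((n : ℤ[X]) + 1) * hermite n := by
  induction n using Nat.twoStepInduction with
  | zero => simp
  | one => simp; ring
  | more n ih₁ ih₂ =>
    have hrec : hermite (n + 2) = X * hermite (n + 1) - ((n : ℤ[X]) + 1) * hermite n := by
      rw [hermite_succ (n + 1), ih₁]
    rw [hermite_succ (n + 2), derivative_sub, derivative_mul, derivative_X, one_mul, ih₂,
      derivative_mul, ih₁, hrec]
    push_cast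
    simp only [derivative_add, derivative_natCast, derivative_one]
    ring

theorem Polynomial.hermite_add_two (n : ℕ) :
    hermite (n + 2) = X * hermite (n + 1) - ((n : ℤ[X]) + 1) * hermite n := by
  rw [hermite_succ (n + 1), derivative_hermite_succ]

theorem H_add_two (n : ℕ) (s : ℝ) : H (n + 2) s = s * H (n + 1) s - (n + 1) * H n s := by
  simp only [H, hermite_add_two, Polynomial.map_sub, Polynomial.map_mul, Polynomial.map_add,
    Polynomial.map_natCast, Polynomial.map_one, Polynomial.map_X, eval_sub, eval_mul, eval_add,
    eval_natCast, eval_one, eval_X]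

theorem H_one (s : ℝ) : H 1 s = s := by simp [H]

theorem H_two (s : ℝ) : H 2 s = s ^ 2 - 1 := by
  simp [H]; ring

theorem aeval_P_add_two {A : Type*} [Ring A] [Algebra ℝ A] (x : A) (n : ℕ) :
    aeval x (P (n + 2)) = x * aeval x (P (n + 1)) + β (n + 1) • aeval x (P n) := by
  simp [P, Algebra.smul_def]

theorem aeval_smul_P_eq_smul_pow {A : Type*} [Ring A] [Algebra ℝ A] {u : A} (hu : u ^ 2 = -1)
    {s : ℝ} {c : ℕ → ℝ} (h₀ : c 0 = 1) (h₁ : c 1 = s)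
    (hc : ∀ n, c (n + 2) = s * c (n + 1) - β (n + 1) * c n) (n : ℕ) :
    aeval (s • u) (P n) = c n • u ^ n := by
  induction n using Nat.twoStepInduction with
  | zero => simp [P, h₀]
  | one => simp [P, h₁]
  | more n ih₁ ih₂ =>
    have hpow : u ^ n = -u ^ (n + 2) := by rw [pow_add, hu, mul_neg, mul_one, neg_neg]
    rw [aeval_P_add_two, ih₁, ih₂, smul_mul_smul_comm, ← pow_succ', smul_smul, hpow, smul_neg,
      ← neg_smul, ← add_smul, hc]
    ring_nf

noncomputable def hermiteCoeff (s : ℝ) (n : ℕ) : ℝ :=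
  if Even n then H (n + 1) s / s else (s * H (n + 1) s + H n s) / s ^ 2

theorem hermiteCoeff_of_even {s : ℝ} {n : ℕ} (hn : Even n) :
    hermiteCoeff s n = H (n + 1) s / s := if_pos hn

theorem hermiteCoeff_of_odd {s : ℝ} {n : ℕ} (hn : Odd n) :
    hermiteCoeff s n = (s * H (n + 1) s + H n s) / s ^ 2 := if_neg (Nat.not_even_iff_odd.2 hn)

theorem hermiteCoeff_add_two {s : ℝ} (hs : s ≠ 0) (n : ℕ) :
    hermiteCoeff s (n + 2) = s * hermiteCoeff s (n + 1) - β (n + 1) * hermiteCoeff s n := by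
  rcases Nat.even_or_odd n with hn | hn
  · have hβ : β (n + 1) = n + 3 := by simp [β, hn.add_one]; ring
    rw [hermiteCoeff_of_even (hn.add even_two), hermiteCoeff_of_odd hn.add_one,
      hermiteCoeff_of_even hn, hβ, H_add_two (n + 1)]
    field_simp
    push_cast
    ring
  · have hβ : β (n + 1) = n + 1 := by simp [β, Nat.not_odd_iff_even.2 hn.add_one]
    rw [hermiteCoeff_of_odd (hn.add_even even_two), hermiteCoeff_of_even hn.add_one,
      hermiteCoeff_of_odd hn, hβ, H_add_two (n + 1), H_add_two n]
    field_simp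
    push_cast
    ring

theorem stmt8 (u : ℍ[ℝ]) (hu : u ^ 2 = -1) (s : ℝ) (hs : 0 < s) (n : ℕ) :
    (Even n → aeval (s • u) (P n) = (H (n + 1) s / s) • u ^ n) ∧
    (Odd n → aeval (s • u) (P n) = ((s * H (n + 1) s + H n s) / s ^ 2) • u ^ n) := by
  have hcoeff : aeval (s • u) (P n) = hermiteCoeff s n • u ^ n := by
    refine aeval_smul_P_eq_smul_pow hu ?_ ?_ (hermiteCoeff_add_two hs.ne') n
    · rw [hermiteCoeff_of_even Even.zero, H_one, div_self hs.ne']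
    · rw [hermiteCoeff_of_odd odd_one, H_two, H_one]
      field_simp
      ring
  exact ⟨fun hn => by rw [hcoeff, hermiteCoeff_of_even hn],
    fun hn => by rw [hcoeff, hermiteCoeff_of_odd hn]⟩
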